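/- For an integer p ≥ 5, the polynomial Q(X) = X² − (2(p−3)+1)X + 2 satisfies Q(2(p−3)) = −2(p−3) + 2 < 0, hence has two real roots α and β with β > 2(p−3) > 1 and 0 < α = 2/β < 1/(p−3) < 1; that is, Q is a Pisot polynomial. -/

import Mathlib

/-! A monic real quadratic that is negative at some point `t` has two real roots `α < t < β`.
For `Q` this applies at `t = 2(p−3)`, and since the roots multiply to `Q 0 = 2`, the small root is
`α = 2/β < 2/(2(p−3))`. -/

theorem exists_factorization_of_quadratic_neg {b d t : ℝ} (ht : t ^ 2 - b * t + d < 0) :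
    ∃ α β : ℝ, (∀ x : ℝ, x ^ 2 - b * x + d = (x - α) * (x - β)) ∧ α < t ∧ t < β := by
  have hdisc : 0 ≤ b ^ 2 - 4 * d := by nlinarith [sq_nonneg (2 * t - b)]
  set s := √(b ^ 2 - 4 * d)
  have hs : s ^ 2 = b ^ 2 - 4 * d := Real.sq_sqrt hdisc
  -- `4 (t² − b t + d) = (2t − b)² − s²`, so `|2t − b| < s`
  have hts : |2 * t - b| < s := abs_lt_of_sq_lt_sq (by nlinarith) (Real.sqrt_nonneg _)
  refine ⟨(b - s) / 2, (b + s) / 2, fun x => by linear_combination (1 / 4 : ℝ) * hs, ?_, ?_⟩ <;>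
    linarith [abs_lt.mp hts]

/-- For an integer `p ≥ 5`, the polynomial `Q(X) = X² − (2(p−3)+1)X + 2` satisfies
`Q(2(p−3)) = −2(p−3) + 2 < 0`, hence has two real roots `α` and `β` with
`β > 2(p−3) > 1` and `0 < α = 2/β < 1/(p−3) < 1`; that is, `Q` is a Pisot polynomial. -/
theorem variant_splitting_h_eq_two (p : ℤ) (hp : 5 ≤ p)
    (Q : ℝ → ℝ)
    (hQ : ∀ x : ℝ, Q x = x ^ 2 - (2 * ((p : ℝ) - 3) + 1) * x + 2) :
    Q (2 * ((p : ℝ) - 3)) = -2 * ((p : ℝ) - 3) + 2 ∧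
      Q (2 * ((p : ℝ) - 3)) < 0 ∧
      (∃ α β : ℝ, (∀ x : ℝ, Q x = (x - α) * (x - β)) ∧
        2 * ((p : ℝ) - 3) < β ∧ 0 < α ∧ α = 2 / β ∧ α < 1 / ((p : ℝ) - 3)) ∧
      1 < 2 * ((p : ℝ) - 3) ∧ 1 / ((p : ℝ) - 3) < 1 := by
  set c : ℝ := (p : ℝ) - 3
  have hc : 2 ≤ c := by
    have : (5 : ℝ) ≤ p := by exact_mod_cast hp
    linarith
  have hQc : Q (2 * c) = -2 * c + 2 := by rw [hQ]; ring
  have hQneg : Q (2 * c) < 0 := by linarith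
  obtain ⟨α, β, hfac, -, hβ⟩ := exists_factorization_of_quadratic_neg (hQ (2 * c) ▸ hQneg)
  have hβpos : 0 < β := by linarith
  have hαβ : α = 2 / β := eq_div_of_mul_eq hβpos.ne' (by linarith [hfac 0])
  have hα : α < 1 / c :=
    calc α = 2 / β := hαβ
      _ < 2 / (2 * c) := by gcongr
      _ = 1 / c := by field_simp
  refine ⟨hQc, hQneg, ⟨α, β, fun x => (hQ x).trans (hfac x), hβ, ?_, hαβ, hα⟩, by linarith, ?_⟩
  · rw [hαβ]; positivity
  · rw [div_lt_one (by linarith)]; linarith
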